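/- arXiv:1906.07031 — 5 statements merged into one kernel-verified Lean document; each statement's English description precedes it below -/
import Mathlib

section
/- Let R ⊆ {0,1}^n be a relation preserved by the Boolean operation ∧ (coordinatewise meet) and containing the all-zero tuple 0^n. If coordinate i ∈ {1,…,n} is uniquely determined in R (for all s,t ∈ R, s[j]=t[j] for all j≠i implies s[i]=t[i]), then either t[i] = 0 for all t ∈ R, or there exist indices i₁,…,i_k ∈ {1,…,n}\{i} such that t[i] = t[i₁] ∧ … ∧ t[i_k] for every t ∈ R. -/
/-!
Let `u` be the meet of all tuples of `R` whose `i`-th coordinate is `1`; by `∧`-closure and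
finiteness `u ∈ R`, and `u i = 1`. If `t ∈ R` is `1` wherever `u` is (off `i`), then `t ∧ u`
agrees with `u` off `i`, so unique determination forces `t i = u i = 1`. Hence `t i` is the
conjunction of the coordinates `j ≠ i` with `u j = 1`; the zero tuple shows there is at
least one such `j`.
-/

lemma InfClosed.sInf_mem_of_finite {α : Type*} [CompleteLattice α] {s : Set α}
    (hs : InfClosed s) (hfin : s.Finite) (hne : s.Nonempty) : sInf s ∈ s := by
  lift s to Finset α using hfin
  rw [← Finset.inf_id_eq_sInf, ← Finset.inf'_eq_inf (Finset.coe_nonempty.1 hne)]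
  exact hs.finsetInf'_mem _ fun _ h ↦ h

namespace Bool

variable {ι : Type*} {R : Set (ι → Bool)} {i : ι}

lemma sInf_apply_eq_true {S : Set (ι → Bool)} {j : ι} :
    sInf S j = true ↔ ∀ t ∈ S, t j = true := by
  rw [sInf_apply]
  exact iInf_eq_top.trans Subtype.forall

lemma infClosed_setOf_apply_eq_true : InfClosed {t : ι → Bool | t i = true} :=
  fun s hs t ht ↦ by simp_all

def impliedCoords (R : Set (ι → Bool)) (i : ι) : Set ι :=
  {j | j ≠ i ∧ ∀ t ∈ R, t i = true → t j = true}

variable [Finite ι]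

lemma apply_eq_true_iff_forall_impliedCoords (hR : InfClosed R)
    (hdet : ∀ s ∈ R, ∀ t ∈ R, (∀ j ≠ i, s j = t j) → s i = t i) (hne : ∃ t ∈ R, t i = true)
    {t : ι → Bool} (ht : t ∈ R) :
    t i = true ↔ ∀ j ∈ impliedCoords R i, t j = true := by
  set u := sInf {s ∈ R | s i = true}
  obtain ⟨huR, hui⟩ : u ∈ {s ∈ R | s i = true} :=
    (hR.inter infClosed_setOf_apply_eq_true).sInf_mem_of_finite (Set.toFinite _) hne
  have hu (j : ι) : u j = true ↔ ∀ s ∈ R, s i = true → s j = true := by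
    simp only [u, sInf_apply_eq_true, Set.mem_ofPred_eq, and_imp]
  refine ⟨fun hti j hj ↦ hj.2 t ht hti, fun h ↦ ?_⟩
  have hagree : ∀ j ≠ i, (t ⊓ u) j = u j := by
    intro j hj
    cases huj : u j
    · simp [huj]
    · simp [huj, h j ⟨hj, (hu j).1 huj⟩]
  simpa [hui] using hdet _ (hR ht huR) _ huR hagree

lemma impliedCoords_nonempty (hR : InfClosed R)
    (hdet : ∀ s ∈ R, ∀ t ∈ R, (∀ j ≠ i, s j = t j) → s i = t i) (hne : ∃ t ∈ R, t i = true)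
    (hbot : ⊥ ∈ R) : (impliedCoords R i).Nonempty := by
  by_contra hempty
  rw [Set.not_nonempty_iff_eq_empty] at hempty
  simpa [hempty] using (apply_eq_true_iff_forall_impliedCoords hR hdet hne hbot).2

end Bool

/-- In a `∧`-closed Boolean relation containing the all-zero tuple, a uniquely
determined coordinate is either constantly `0` or a conjunction of other
coordinates. -/
theorem stmt_4 {n : ℕ} (R : Set (Fin n → Bool))
    (hand : ∀ s ∈ R, ∀ t ∈ R, (fun j => s j && t j) ∈ R)
    (hzero : (fun _ : Fin n => false) ∈ R)
    (i : Fin n)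
    (hdet : ∀ s ∈ R, ∀ t ∈ R, (∀ j ≠ i, s j = t j) → s i = t i) :
    (∀ t ∈ R, t i = false) ∨
    (∃ (k : ℕ), 0 < k ∧ ∃ idx : Fin k → Fin n, (∀ j, idx j ≠ i) ∧
      ∀ t ∈ R, t i = (Finset.univ.inf fun j : Fin k => t (idx j))) := by
  refine or_iff_not_imp_left.2 fun hall ↦ ?_
  have hne : ∃ t ∈ R, t i = true := by simpa using hall
  have hR : InfClosed R := hand
  obtain ⟨k, idx, -, hrange⟩ := (Set.toFinite (Bool.impliedCoords R i)).fin_param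
  have hk : 0 < k := by
    have := Bool.impliedCoords_nonempty hR hdet hne hzero
    rw [← hrange, Set.range_nonempty_iff_nonempty] at this
    exact Fin.pos_iff_nonempty.2 this
  have hidx (m : Fin k) : idx m ∈ Bool.impliedCoords R i := hrange ▸ Set.mem_range_self m
  refine ⟨k, hk, idx, fun m ↦ (hidx m).1, fun t ht ↦ ?_⟩
  rw [Bool.eq_iff_iff, Bool.apply_eq_true_iff_forall_impliedCoords hR hdet hne ht, ← hrange,
    Set.forall_mem_range]
  simpa using (Finset.inf_eq_top_iff (fun m ↦ t (idx m)) Finset.univ).symm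
end

section
/- There exists a semilattice operation s on D = {0,1,2} (binary, idempotent, commutative, associative) and a relation R ⊆ D² preserved by s such that the second coordinate of R is uniquely determined by the first, yet the second coordinate cannot be expressed as any composition built from s applied to the first coordinate. Concretely: let s(x,x)=x and s(x,y)=0 for x≠y, and R = {(0,0),(1,1),(2,0)}; then s preserves R, the second coordinate of R is a function of the first, but there is no term function t in the clone generated by s with t(a) = b for all (a,b) ∈ R (indeed every unary term function of this clone is the identity). -/
/-- Unary terms in the clone generated by a single binary operation. -/
inductive UnaryTerm : Type
  | var : UnaryTerm
  | node : UnaryTerm → UnaryTerm → UnaryTerm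

/-- Evaluation of a unary term over a binary operation `s`. -/
def UnaryTerm.eval {D : Type*} (s : D → D → D) : UnaryTerm → D → D
  | .var, x => x
  | .node a b, x => s (a.eval s x) (b.eval s x)

theorem UnaryTerm.eval_eq_self_of_idempotent {D : Type*} {s : D → D → D}
    (hs : ∀ x, s x x = x) (T : UnaryTerm) (x : D) : T.eval s x = x := by
  induction T with
  | var => rfl
  | node a b iha ihb => simp only [UnaryTerm.eval, iha, ihb, hs]

def collapseTo {D : Type*} [DecidableEq D] (z x y : D) : D :=
  if x = y then x else z

section collapseTo

variable {D : Type*} [DecidableEq D] (z : D)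

theorem collapseTo_self (x : D) : collapseTo z x x = x := if_pos rfl

theorem collapseTo_of_ne {x y : D} (h : x ≠ y) : collapseTo z x y = z := if_neg h

theorem collapseTo_comm (x y : D) : collapseTo z x y = collapseTo z y x := by
  by_cases h : x = y
  · rw [h]
  · rw [collapseTo_of_ne z h, collapseTo_of_ne z (Ne.symm h)]

theorem collapseTo_assoc (x y w : D) :
    collapseTo z (collapseTo z x y) w = collapseTo z x (collapseTo z y w) := by
  unfold collapseTo
  split_ifs <;> simp_all

end collapseTo

/-- There is a semilattice operation `s` on `{0,1,2}` and an `s`-invariant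
binary relation whose second coordinate is a function of the first, yet no
unary term function of the clone generated by `s` realises this function:
every unary term function of this clone is the identity. -/
theorem stmt_5 :
    ∃ s : Fin 3 → Fin 3 → Fin 3,
      (∀ x, s x x = x) ∧ (∀ x y, s x y = s y x) ∧
      (∀ x y z, s (s x y) z = s x (s y z)) ∧
      (∀ x y, x ≠ y → s x y = 0) ∧
      ∃ R : Set (Fin 3 × Fin 3),
        R = {(0, 0), (1, 1), (2, 0)} ∧
        (∀ a ∈ R, ∀ b ∈ R, (s a.1 b.1, s a.2 b.2) ∈ R) ∧
        (∃ h : Fin 3 → Fin 3, ∀ t ∈ R, h t.1 = t.2) ∧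
        (¬ ∃ T : UnaryTerm, ∀ t ∈ R, T.eval s t.1 = t.2) ∧
        (∀ (T : UnaryTerm) (x : Fin 3), T.eval s x = x) := by
  have eval_eq_self := UnaryTerm.eval_eq_self_of_idempotent (collapseTo_self (0 : Fin 3))
  refine ⟨collapseTo 0, collapseTo_self 0, collapseTo_comm 0, collapseTo_assoc 0,
    fun _ _ => collapseTo_of_ne 0, _, rfl, ?preserved, ⟨fun x => if x = 1 then 1 else 0, ?graph⟩,
    ?no_term, eval_eq_self⟩
  case preserved =>
    simp only [Set.mem_insert_iff, Set.mem_singleton_iff]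
    decide
  case graph =>
    simp only [Set.mem_insert_iff, Set.mem_singleton_iff]
    decide
  case no_term =>
    rintro ⟨T, hT⟩
    have h20 : T.eval (collapseTo 0) (2 : Fin 3) = 0 := hT (2, 0) (by simp)
    rw [eval_eq_self] at h20
    exact absurd h20 (by decide)
end

section
/- Define R = {(0,0,1,0,1),(0,1,0,0,1),(1,0,0,0,1)} ⊆ {0,1}^5. Then every operation f : {0,1}^k → {0,1} that preserves R is a projection. -/
/-!
A family `t₁, …, t_k` of tuples of `R9` is the same as an ordered partition `(A, B, C)` of the
argument positions (`t_j` has its `1` among the first three coordinates in the block of `j`), and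
then the image tuple has the indicators of `A`, `B`, `C` as its first three columns. So if `f`
preserves `R9`, then on every such partition `f` takes the value `true` on exactly one of the three
indicators. The partitions `(∅, ∅, univ)`, `(A, Aᶜ, ∅)` and `(A, B, (A ∪ B)ᶜ)` then show
that `{A | f (indicator A) = true}` is an ultrafilter; on a finite set it is principal, generated by
some `i`, and `f` is the projection onto `i`.
-/

/-- The relation `{(0,0,1,0,1),(0,1,0,0,1),(1,0,0,0,1)}`. -/
def R9 : Set (Fin 5 → Bool) :=
  {![false, false, true, false, true],
   ![false, true, false, false, true],
   ![true, false, false, false, true]}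

open Set

/-- `g` picks exactly one block of every ordered partition `(A, B, (A ∪ B)ᶜ)` of `α`. -/
def SelectsOneOfThree {α : Type*} (g : Set α → Bool) : Prop :=
  ∀ A B : Set α, Disjoint A B → (g A).toNat + (g B).toNat + (g (A ∪ B)ᶜ).toNat = 1

namespace SelectsOneOfThree

variable {α : Type*} {g : Set α → Bool} (hg : SelectsOneOfThree g)
include hg

theorem apply_empty : g ∅ = false := by
  have h := hg ∅ ∅ (disjoint_empty _)
  rw [← Bool.not_eq_true, ← Bool.toNat_eq_one]
  omega

theorem apply_univ : g univ = true := by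
  have h := hg ∅ ∅ (disjoint_empty _)
  rw [union_empty, compl_empty, hg.apply_empty] at h
  simpa using h

theorem apply_compl (A : Set α) : g Aᶜ = !g A := by
  have h := hg A ∅ (disjoint_empty _)
  rw [union_empty, hg.apply_empty] at h
  cases h₀ : g A <;> cases h₁ : g Aᶜ <;> simp_all

theorem apply_union {A B : Set α} (hAB : Disjoint A B) :
    (g (A ∪ B)).toNat = (g A).toNat + (g B).toNat := by
  have h := hg A B hAB
  rw [hg.apply_compl] at h
  cases h₀ : g A <;> cases h₁ : g B <;> cases h₂ : g (A ∪ B) <;> simp_all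

theorem mono {A B : Set α} (hA : g A = true) (hAB : A ⊆ B) : g B = true := by
  have hsplit := hg.apply_union (disjoint_sdiff_right (s := A) (t := B))
  rw [union_sdiff_cancel hAB, hA, Bool.toNat_true] at hsplit
  rw [← Bool.toNat_eq_one]
  have := Bool.toNat_le (g B)
  omega

theorem inter {A B : Set α} (hA : g A = true) (hB : g B = true) : g (A ∩ B) = true := by
  have hdiff : g (A \ B) = false := by
    have := mt (hg.mono · (sdiff_subset_compl A B))
    simpa [hg.apply_compl, hB] using this
  have hsplit := hg.apply_union (disjoint_sdiff_inter (s := A) (t := B)).symm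
  rw [inter_union_sdiff, hA, hdiff] at hsplit
  cases h : g (A ∩ B) <;> simp_all

def toUltrafilter : Ultrafilter α :=
  .ofComplNotMemIff
    { sets := {A | g A = true}
      univ_sets := hg.apply_univ
      sets_of_superset := hg.mono
      inter_sets := hg.inter }
    fun A => by simp [hg.apply_compl]

theorem exists_apply_eq_true_iff_mem [Finite α] : ∃ a, ∀ A, g A = true ↔ a ∈ A := by
  obtain ⟨a, ha⟩ := hg.toUltrafilter.eq_pure_of_finite
  exact ⟨a, fun A => show A ∈ hg.toUltrafilter ↔ a ∈ A by rw [ha]; rfl⟩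

end SelectsOneOfThree

theorem selectsOneOfThree_of_preserves_R9 {ι : Type*} {f : (ι → Bool) → Bool}
    (hf : ∀ t : ι → Fin 5 → Bool, (∀ j, t j ∈ R9) → (fun c => f fun j => t j c) ∈ R9) :
    SelectsOneOfThree fun A : Set ι => f A.boolIndicator := by
  classical
  intro A B hAB
  let t : ι → Fin 5 → Bool := fun j =>
    if j ∈ A then ![true, false, false, false, true]
    else if j ∈ B then ![false, true, false, false, true]
    else ![false, false, true, false, true]
  have ht : ∀ j, t j ∈ R9 := fun j => by
    simp only [t]; split_ifs <;> simp [R9]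
  have col₀ : (fun j => t j 0) = A.boolIndicator := by
    funext j; simp only [t, boolIndicator]; split_ifs <;> simp_all
  have col₁ : (fun j => t j 1) = B.boolIndicator := by
    funext j; simp only [t, boolIndicator]; split_ifs <;> simp_all [hAB.notMem_of_mem_left]
  have col₂ : (fun j => t j 2) = (A ∪ B)ᶜ.boolIndicator := by
    funext j; simp only [t, boolIndicator]; split_ifs <;> simp_all
  have hrow := hf t ht
  simp only [R9, mem_insert_iff, mem_singleton_iff] at hrow
  rcases hrow with h | h | h <;>
  · have h₀ := congrFun h 0
    have h₁ := congrFun h 1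
    have h₂ := congrFun h 2
    simp only [col₀, col₁, col₂] at h₀ h₁ h₂
    beta_reduce
    rw [h₀, h₁, h₂]
    rfl

/-- Every operation preserving `R9` is a projection. -/
theorem stmt_9 :
    ∀ (k : ℕ) (f : (Fin k → Bool) → Bool),
      (∀ t : Fin k → (Fin 5 → Bool), (∀ j, t j ∈ R9) →
        (fun c : Fin 5 => f (fun j => t j c)) ∈ R9) →
      ∃ i : Fin k, ∀ x : Fin k → Bool, f x = x i := by
  intro k f hf
  obtain ⟨i, hi⟩ := (selectsOneOfThree_of_preserves_R9 hf).exists_apply_eq_true_iff_mem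
  refine ⟨i, fun x => Bool.eq_iff_iff.2 ?_⟩
  have hx : {j | x j = true}.boolIndicator = x := by
    funext j; simp [boolIndicator]
  simpa [hx] using hi {j | x j = true}
end

section
/- Let R ⊆ {0,1}^n be preserved by both the ternary operation g(x,y,z) = x ∧ (y ∨ z) and the constant 0 operation. Then every coordinate i of R that is uniquely determined by the other coordinates is either constant 0 on R or equal (as a function on R) to some single other coordinate j. -/
/-- For a Boolean relation preserved by `g(x,y,z) = x ∧ (y ∨ z)` and by the
constant `0` operation, every uniquely determined coordinate is constantly `0`
or duplicates another coordinate. -/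
theorem stmt_15 {n : ℕ} (R : Set (Fin n → Bool))
    (hg : ∀ s ∈ R, ∀ t ∈ R, ∀ u ∈ R, (fun j => s j && (t j || u j)) ∈ R)
    (hzero : (fun _ : Fin n => false) ∈ R)
    (i : Fin n)
    (hdet : ∀ s ∈ R, ∀ t ∈ R, (∀ j ≠ i, s j = t j) → s i = t i) :
    (∀ t ∈ R, t i = false) ∨ (∃ j ≠ i, ∀ t ∈ R, t i = t j) := by
  classical
  by_cases hconst : ∀ t ∈ R, t i = false
  · exact Or.inl hconst
  right
  push_neg at hconst
  obtain ⟨t0, ht0R, ht0i⟩ := hconst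
  rw [ne_eq, Bool.not_eq_false] at ht0i
  -- closure under ∧
  have hand : ∀ s ∈ R, ∀ t ∈ R, (fun j => s j && t j) ∈ R := by
    intro s hs t ht
    simpa using hg s hs t ht t ht
  set F : Finset (Fin n → Bool) := Finset.univ.filter (fun t => t ∈ R ∧ t i = true)
    with hFdef
  have hne : F.Nonempty := ⟨t0, by simp [hFdef, ht0R, ht0i]⟩
  have hinf : ∀ (G : Finset (Fin n → Bool)) (hG : G.Nonempty),
      (∀ t ∈ G, t ∈ R) → G.inf' hG id ∈ R := by
    intro G
    induction G using Finset.induction_on with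
    | empty => intro h; simp at h
    | insert _ _ ha ih =>
      rename_i a G'
      intro hG hsub
      by_cases hG' : G'.Nonempty
      · have hmem := ih hG' (fun t ht => hsub t (Finset.mem_insert_of_mem ht))
        have ha' := hsub a (Finset.mem_insert_self a G')
        have := hand a ha' _ hmem
        have heq : (insert a G').inf' hG id = fun j => a j && (G'.inf' hG' id) j := by
          rw [Finset.inf'_insert hG']
          funext j
          simp [Pi.inf_apply]
        rw [heq]
        exact this
      · have hGe : G' = ∅ := Finset.not_nonempty_iff_eq_empty.mp hG'
        subst hGe
        simpa using hsub a (Finset.mem_insert_self a ∅)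
  set m : Fin n → Bool := F.inf' hne id with hmdef
  have hmR : m ∈ R := hinf F hne (fun t ht => (Finset.mem_filter.mp ht).2.1)
  have hmle : ∀ t ∈ R, t i = true → ∀ j, m j = true → t j = true := by
    intro t ht hti j hmj
    have hmem : t ∈ F := by simp [hFdef, ht, hti]
    have h1 : m ≤ t := Finset.inf'_le id hmem
    have h2 : m j ≤ t j := h1 j
    rw [hmj] at h2
    cases h3 : t j
    · rw [h3] at h2; exact absurd h2 (by decide)
    · rfl
  have hmi : m i = true := by
    have h1 : m i = F.inf' hne (fun t => t i) := Finset.inf'_apply ..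
    rw [h1]
    have : ∀ t ∈ F, (true : Bool) ≤ t i := by
      intro t ht
      rw [(Finset.mem_filter.mp ht).2.2]
    have h2 := Finset.le_inf' hne (fun t => t i) this
    exact le_antisymm (Bool.le_true _) h2
  by_cases hj : ∃ j, j ≠ i ∧ m j = true ∧ ∀ t ∈ R, t j = true → t i = true
  · obtain ⟨j, hji, hmj, himp⟩ := hj
    refine ⟨j, hji, fun t ht => ?_⟩
    cases hti : t i with
    | true => exact (hmle t ht hti j hmj).symm
    | false =>
      cases htj : t j with
      | true => rw [← hti, himp t ht htj]
      | false => rfl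
  · push_neg at hj
    have key : ∀ (A : Finset (Fin n)), (∀ j ∈ A, j ≠ i ∧ m j = true) →
        ∃ w ∈ R, w i = false ∧ (∀ k, w k = true → m k = true) ∧ ∀ j ∈ A, w j = m j := by
      intro A
      induction A using Finset.induction_on with
      | empty =>
        intro _
        exact ⟨fun _ => false, hzero, rfl, by simp, by simp⟩
      | insert _ _ ha ih =>
        rename_i a A'
        intro hA
        obtain ⟨w', hw'R, hw'i, hw'le, hw'A⟩ :=
          ih (fun j hj => hA j (Finset.mem_insert_of_mem hj))
        obtain ⟨hai, hma⟩ := hA a (Finset.mem_insert_self a A')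
        obtain ⟨t, htR, hta, hti⟩ := hj a hai hma
        rw [ne_eq, Bool.not_eq_true] at hti
        refine ⟨fun k => m k && (w' k || t k), hg m hmR w' hw'R t htR, ?_, ?_, ?_⟩
        · simp [hw'i, hti]
        · intro k hk
          exact (Bool.and_eq_true _ _ |>.mp hk).1
        · intro j hjmem
          rcases Finset.mem_insert.mp hjmem with rfl | hjA'
          · simp [hta, hma]
          · show (m j && (w' j || t j)) = m j
            rw [hw'A j hjA']
            cases m j <;> simp
    obtain ⟨w, hwR, hwi, hwle, hwA⟩ :=
      key (Finset.univ.filter (fun j => j ≠ i ∧ m j = true))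
        (fun j hj => (Finset.mem_filter.mp hj).2)
    have hagree : ∀ j ≠ i, w j = m j := by
      intro j hji
      by_cases hmj : m j = true
      · exact hwA j (by simp [hji, hmj])
      · rw [Bool.not_eq_true] at hmj
        rw [hmj]
        cases hwj : w j with
        | false => rfl
        | true => rw [hwle j hwj] at hmj; exact absurd hmj (by decide)
    have := hdet w hwR m hmR hagree
    rw [hwi, hmi] at this
    exact absurd this (by decide)
end

section
/- Fix n ≥ 2 and let R_w ⊆ {0,1}^{n+2} be the weak base relation of IS^n_11: R_w(x₁,…,x_n, y, c₀) ⟺ ¬(x₁∧…∧x_n) ∧ (¬y → (¬x₁∧…∧¬x_n)) ∧ (c₀ = 0). Define the n-ary partial operation f whose domain is {e₁,…,e_n} ∪ {0^n}, where e_i is the i-th standard unit vector in {0,1}^n, with f(e_i) = 1 for all i and f(0^n) = 0. Then f preserves R_w but does not preserve the relation NAND^n = {0,1}^n \ {1^n}. -/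
/-!
The operation `f` is the disjunction of its arguments, applied only to columns with at most one
`1`. Applied to rows of `R_w`, the `c₀`-column is zero and a zero `y`-column forces zero
`x`-columns. If every `x`-column of the result were `1`, each `xᵢ`-column would have its `1` in a
row whose `y` is then `1`; as the `y`-column has at most one `1`, all these rows coincide, and that
row would have all `xᵢ = 1`, which `R_w` forbids. For `NAND^n`, the rows `e₁, …, eₙ` (zero
somewhere since `n ≥ 2`) have the unit vectors as columns, which `f` sends to `1ⁿ`.
-/

/-- The weak base relation of `IS^n_11`: coordinates `0..n-1` are the `xᵢ`,
coordinate `n` is `y`, coordinate `n+1` is `c₀`. -/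
def RwS (n : ℕ) (t : Fin (n + 2) → Bool) : Prop :=
  (∃ i : Fin n, t (i.castLE (by omega)) = false) ∧
  (t ⟨n, by omega⟩ = false → ∀ i : Fin n, t (i.castLE (by omega)) = false) ∧
  t ⟨n + 1, by omega⟩ = false

/-- Domain of the partial `n`-ary operation: the unit vectors and the zero
vector. -/
def unitDom (n : ℕ) : Set (Fin n → Bool) :=
  {v | ∀ j, v j = false} ∪
  {v | ∃ j, v j = true ∧ ∀ j' ≠ j, v j' = false}

/-- `f v = 1` iff `v` is not the zero vector (so `f(eᵢ) = 1`, `f(0) = 0`). -/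
def fU {n : ℕ} (v : Fin n → Bool) : Bool := decide (∃ j, v j = true)

/-- NAND^n: all tuples except the all-ones tuple. -/
def NAND (n : ℕ) : Set (Fin n → Bool) := {v | ∃ i, v i = false}

lemma fU_eq_false_iff {n : ℕ} (v : Fin n → Bool) : fU v = false ↔ ∀ j, v j = false := by
  simp [fU]

lemma fU_eq_true_iff {n : ℕ} (v : Fin n → Bool) : fU v = true ↔ ∃ j, v j = true := by
  simp [fU]

lemma eq_of_mem_unitDom {n : ℕ} {v : Fin n → Bool} (hv : v ∈ unitDom n) {r r' : Fin n}
    (hr : v r = true) (hr' : v r' = true) : r = r' := by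
  rcases hv with hzero | ⟨j, -, hj⟩
  · simp [hzero r] at hr
  · have hrj : r = j := by by_contra h; simp [hj r h] at hr
    have hr'j : r' = j := by by_contra h; simp [hj r' h] at hr'
    rw [hrj, hr'j]

section Preservation

variable {n : ℕ} (T : Fin n → Fin (n + 2) → Bool)

lemma exists_fU_x_eq_false (hn : 0 < n) (hT : ∀ r, RwS n (T r))
    (hdom : ∀ j, (fun r => T r j) ∈ unitDom n) :
    ∃ i : Fin n, fU (fun r => T r (i.castLE (by omega))) = false := by
  by_contra! hall
  have hrow : ∀ i : Fin n, ∃ r, T r (i.castLE (by omega)) = true := fun i =>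
    (fU_eq_true_iff _).1 (Bool.not_eq_false _ ▸ hall i)
  have hy : ∀ {r : Fin n} (i : Fin n), T r (i.castLE (by omega)) = true →
      T r ⟨n, by omega⟩ = true := by
    intro r i hri
    by_contra hyr
    simp [(hT r).2.1 (Bool.not_eq_true _ ▸ hyr) i] at hri
  obtain ⟨r₀, hr₀⟩ := hrow ⟨0, hn⟩
  obtain ⟨i, hi⟩ := (hT r₀).1
  obtain ⟨r, hr⟩ := hrow i
  have hrr₀ : r = r₀ := eq_of_mem_unitDom (hdom ⟨n, by omega⟩) (hy i hr) (hy _ hr₀)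
  simp [hrr₀ ▸ hr] at hi

theorem fU_preserves_RwS (hn : 0 < n) (hT : ∀ r, RwS n (T r))
    (hdom : ∀ j, (fun r => T r j) ∈ unitDom n) : RwS n (fun j => fU (fun r => T r j)) := by
  refine ⟨exists_fU_x_eq_false T hn hT hdom, fun hy i => ?_, ?_⟩
  · exact (fU_eq_false_iff _).2 fun r => (hT r).2.1 ((fU_eq_false_iff _).1 hy r) i
  · exact (fU_eq_false_iff _).2 fun r => (hT r).2.2

end Preservation

section Identity

variable {n : ℕ}

lemma identity_row_mem_NAND (hn : 2 ≤ n) (r : Fin n) : (fun j => decide (r = j)) ∈ NAND n := by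
  obtain ⟨j, hj⟩ : ∃ j : Fin n, r ≠ j :=
    ⟨if r.val = 0 then ⟨1, by omega⟩ else ⟨0, by omega⟩, by split_ifs <;> grind⟩
  exact ⟨j, by simpa using hj⟩

lemma identity_column_mem_unitDom (j : Fin n) : (fun r => decide (r = j)) ∈ unitDom n :=
  Or.inr ⟨j, by simp, fun j' hj' => by simpa using hj'⟩

lemma fU_identity_column (j : Fin n) : fU (fun r : Fin n => decide (r = j)) = true :=
  (fU_eq_true_iff _).2 ⟨j, by simp⟩

end Identity

/-- The partial operation `f` preserves the weak base of `IS^n_11` but not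
`NAND^n`. -/
theorem stmt_16 (n : ℕ) (hn : 2 ≤ n) :
    (∀ T : Fin n → (Fin (n + 2) → Bool), (∀ r, RwS n (T r)) →
      (∀ j : Fin (n + 2), (fun r => T r j) ∈ unitDom n) →
      RwS n (fun j => fU (fun r => T r j))) ∧
    ¬ (∀ T : Fin n → (Fin n → Bool), (∀ r, T r ∈ NAND n) →
      (∀ j : Fin n, (fun r => T r j) ∈ unitDom n) →
      (fun j => fU (fun r => T r j)) ∈ NAND n) := by
  refine ⟨fun T hT hdom => fU_preserves_RwS T (by omega) hT hdom, fun hpres => ?_⟩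
  obtain ⟨j, hj⟩ := hpres (fun r j => decide (r = j)) (identity_row_mem_NAND hn)
    identity_column_mem_unitDom
  simp [fU_identity_column j] at hj
end
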